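/- arXiv:2501.12072 — 3 statements merged into one kernel-verified Lean document; each statement's English description precedes it below -/
import Mathlib

section
/- The five operators Z₀X₁Z₂Z₄Z₅, Z₀Z₁X₂Z₄Z₅, Y₀Z₁Z₂Y₃Z₅, X₀Z₃X₄Z₅, Z₁Z₂Z₃Z₄X₅ on six qubits pairwise commute and are independent, hence generate a stabilizer group defining a [[6,1]] stabilizer code; moreover X_L = Z₀X₃Z₅ and Z_L = Z₀Z₃Z₄ commute with all five generators, anticommute with each other, and neither lies in the stabilizer group. -/
/-- A Pauli operator on `n` qubits, modulo phase, in binary symplectic form. -/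
abbrev PauliVec (n : ℕ) := (Fin n → ZMod 2) × (Fin n → ZMod 2)

/-- The symplectic form: `sp e f = 0` iff the Pauli strings commute, `1` iff they
anticommute. -/
def sp {n : ℕ} (e f : PauliVec n) : ZMod 2 :=
  ∑ q, (e.1 q * f.2 q + e.2 q * f.1 q)

/-- Indicator vector of a set of qubits. -/
def ind {n : ℕ} (s : Finset (Fin n)) : Fin n → ZMod 2 :=
  fun i => if i ∈ s then 1 else 0

/-- The five generators Z₀X₁Z₂Z₄Z₅, Z₀Z₁X₂Z₄Z₅, Y₀Z₁Z₂Y₃Z₅, X₀Z₃X₄Z₅, Z₁Z₂Z₃Z₄X₅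
of the [[6,1,3]] bare ancilla code, in symplectic form (x-part, z-part). -/
def gen6 : Fin 5 → PauliVec 6 :=
  ![(ind {1}, ind {0, 2, 4, 5}),
    (ind {2}, ind {0, 1, 4, 5}),
    (ind {0, 3}, ind {0, 1, 2, 3, 5}),
    (ind {0, 4}, ind {3, 5}),
    (ind {5}, ind {1, 2, 3, 4})]

/-- Logical X = Z₀X₃Z₅. -/
def XL6 : PauliVec 6 := (ind {3}, ind {0, 5})

/-- Logical Z = Z₀Z₃Z₄. -/
def ZL6 : PauliVec 6 := (ind ∅, ind {0, 3, 4})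

/-- the five operators pairwise commute and are independent, hence
generate a stabilizer group defining a [[6,1]] stabilizer code; moreover
`X_L = Z₀X₃Z₅` and `Z_L = Z₀Z₃Z₄` commute with all five generators, anticommute
with each other, and neither lies in the stabilizer group. -/
theorem code613_stabilizer :
    (∀ i j, sp (gen6 i) (gen6 j) = 0) ∧
    (∀ c : Fin 5 → ZMod 2, (∑ i, c i • gen6 i) = 0 → c = 0) ∧
    (∀ i, sp XL6 (gen6 i) = 0) ∧
    (∀ i, sp ZL6 (gen6 i) = 0) ∧
    sp XL6 ZL6 = 1 ∧
    XL6 ∉ Submodule.span (ZMod 2) (Set.range gen6) ∧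
    ZL6 ∉ Submodule.span (ZMod 2) (Set.range gen6) := by
  have key : ∀ c : Fin 5 → ZMod 2, (∑ i, c i • gen6 i) ≠ XL6 ∧ (∑ i, c i • gen6 i) ≠ ZL6 := by
    decide
  refine ⟨by decide, by decide, by decide, by decide, by decide, ?_, ?_⟩
  · intro h
    rw [Finsupp.mem_span_range_iff_exists_finsupp] at h
    obtain ⟨c, hc⟩ := h
    rw [Finsupp.sum_fintype _ _ (fun i => zero_smul _ (gen6 i))] at hc
    exact (key c).1 hc
  · intro h
    rw [Finsupp.mem_span_range_iff_exists_finsupp] at h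
    obtain ⟨c, hc⟩ := h
    rw [Finsupp.sum_fintype _ _ (fun i => zero_smul _ (gen6 i))] at hc
    exact (key c).2 hc
end

section
/- The [[6,1,3]] code generated by ⟨Z₀X₁Z₂Z₄Z₅, Z₀Z₁X₂Z₄Z₅, Y₀Z₁Z₂Y₃Z₅, X₀Z₃X₄Z₅, Z₁Z₂Z₃Z₄X₅⟩ has distance exactly 3; namely, each of the 18 single-qubit Pauli errors X_i, Y_i, Z_i (0 ≤ i ≤ 5) has a distinct nonzero 5-bit syndrome except possibly pairs whose product is a stabilizer, no weight-1 or weight-2 Pauli operator commutes with all five generators without being in the stabilizer group, and the weight-3 operator Z₀Z₃Z₄ is a nontrivial logical operator. -/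
/-- Weight of a Pauli operator. -/
def pweight {n : ℕ} (e : PauliVec n) : ℕ :=
  (Finset.univ.filter (fun q => e.1 q ≠ 0 ∨ e.2 q ≠ 0)).card

/-- The 5-bit syndrome of an error with respect to the ordered generators. -/
def synd6 (e : PauliVec 6) : Fin 5 → ZMod 2 := fun j => sp e (gen6 j)

/-- The stabilizer group (mod phase) of the [[6,1,3]] code. -/
def S6 : Submodule (ZMod 2) (PauliVec 6) := Submodule.span (ZMod 2) (Set.range gen6)

/-- Single-qubit Pauli. -/
def pauliAt (i : Fin 6) (a b : ZMod 2) : PauliVec 6 :=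
  (fun q => if q = i then a else 0, fun q => if q = i then b else 0)

lemma mem_S6_iff (e : PauliVec 6) :
    e ∈ S6 ↔ ∃ c : Fin 5 → ZMod 2, ∑ k, c k • gen6 k = e := by
  rw [S6]
  exact Submodule.mem_span_range_iff_exists_fun (ZMod 2)

set_option maxRecDepth 10000 in
lemma key : ∀ i j : Fin 6, ∀ a b c d : ZMod 2,
    synd6 (pauliAt i a b + pauliAt j c d) = 0 →
    ∃ c' : Fin 5 → ZMod 2, ∑ k, c' k • gen6 k = pauliAt i a b + pauliAt j c d := by decide

lemma stab_wt : ∀ c : Fin 5 → ZMod 2, pweight (∑ k, c k • gen6 k) ≠ 1 := by decide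

/-- Every weight-≤2 Pauli has the two-single-qubit form. -/
lemma wt2_form (e : PauliVec 6) (h : pweight e ≤ 2) :
    ∃ i j a b c d, e = pauliAt i a b + pauliAt j c d := by
  classical
  obtain ⟨t, hst, ht2⟩ := Finset.exists_superset_card_eq h (by simp)
  obtain ⟨i, j, hij, rfl⟩ := Finset.card_eq_two.mp ht2
  refine ⟨i, j, e.1 i, e.2 i, e.1 j, e.2 j, ?_⟩
  have hz : ∀ q : Fin 6, q ≠ i → q ≠ j → e.1 q = 0 ∧ e.2 q = 0 := by
    intro q hqi hqj
    by_contra hc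
    have : q ∈ ({i, j} : Finset (Fin 6)) := hst (by
      simp only [Finset.mem_filter, Finset.mem_univ, true_and]
      tauto)
    simp [hqi, hqj] at this
  have hji : j ≠ i := hij.symm
  apply Prod.ext
  · funext q
    simp only [pauliAt, Prod.fst_add, Pi.add_apply]
    by_cases h1 : q = i
    · subst h1; simp [hij]
    · by_cases h2 : q = j
      · subst h2; simp [hji]
      · simp [h1, h2, (hz q h1 h2).1]
  · funext q
    simp only [pauliAt, Prod.snd_add, Pi.add_apply]
    by_cases h1 : q = i
    · subst h1; simp [hij]
    · by_cases h2 : q = j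
      · subst h2; simp [hji]
      · simp [h1, h2, (hz q h1 h2).2]

lemma wt2_mem (e : PauliVec 6) (h : pweight e ≤ 2) (hs : synd6 e = 0) : e ∈ S6 := by
  obtain ⟨i, j, a, b, c, d, rfl⟩ := wt2_form e h
  exact (mem_S6_iff _).mpr (key i j a b c d hs)

lemma synd6_add (e f : PauliVec 6) : synd6 (e + f) = synd6 e + synd6 f := by
  funext j
  simp only [synd6, sp, Pi.add_apply, Prod.fst_add, Prod.snd_add]
  rw [← Finset.sum_add_distrib]
  exact Finset.sum_congr rfl fun q _ => by ring

lemma pweight_add_le (e f : PauliVec 6) : pweight (e + f) ≤ pweight e + pweight f := by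
  classical
  refine le_trans (Finset.card_le_card ?_) (Finset.card_union_le _ _)
  intro q hq
  simp only [Finset.mem_filter, Finset.mem_univ, true_and, Finset.mem_union,
    Prod.fst_add, Prod.snd_add, Pi.add_apply] at hq ⊢
  by_contra hc
  push_neg at hc
  obtain ⟨⟨h1, h2⟩, ⟨h3, h4⟩⟩ := hc
  rcases hq with h | h
  · exact h (by rw [h1, h3, add_zero])
  · exact h (by rw [h2, h4, add_zero])

/-- the [[6,1,3]] code has distance exactly 3: all single-qubit Pauli
errors have nonzero syndromes; any two distinct single-qubit errors sharing a syndrome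
differ by a stabilizer element; no nonzero Pauli of weight ≤ 2 commutes with all five
generators without being in the stabilizer group (every Pauli in the centralizer of S
outside S has weight ≥ 3); and the weight-3 operator Z₀Z₃Z₄ is a nontrivial logical
operator. -/
theorem code613_distance_three :
    (∀ e : PauliVec 6, pweight e = 1 → synd6 e ≠ 0) ∧
    (∀ e f : PauliVec 6, pweight e = 1 → pweight f = 1 → synd6 e = synd6 f →
      e = f ∨ e + f ∈ S6) ∧
    (∀ e : PauliVec 6, e ≠ 0 → pweight e ≤ 2 → synd6 e = 0 → e ∈ S6) ∧
    (∀ e : PauliVec 6, e ∉ S6 → synd6 e = 0 → 3 ≤ pweight e) ∧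
    synd6 ZL6 = 0 ∧ ZL6 ∉ S6 ∧ pweight ZL6 = 3 := by
  refine ⟨?_, ?_, ?_, ?_, ?_, ?_, ?_⟩
  · intro e hw hs
    have := wt2_mem e (by omega) hs
    obtain ⟨c, hc⟩ := (mem_S6_iff e).mp this
    exact stab_wt c (hc ▸ hw)
  · intro e f he hf hsynd
    right
    have hs : synd6 (e + f) = 0 := by
      rw [synd6_add, hsynd]
      funext j
      show synd6 f j + synd6 f j = 0
      exact CharTwo.add_self_eq_zero _
    exact wt2_mem _ (le_trans (pweight_add_le e f) (by omega)) hs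
  · intro e _ hw hs
    exact wt2_mem e hw hs
  · intro e hmem hs
    by_contra hw
    push_neg at hw
    exact hmem (wt2_mem e (by omega) hs)
  · decide
  · rw [mem_S6_iff]; decide
  · decide
end

section
/- For the [[7,1,3]] code generated by ⟨X₀X₁, X₂Z₅, X₃Z₆, X₄Z₆, Z₀Z₁Z₂X₅, Y₀Z₁Z₃Z₄Z₅Y₆⟩, the six generators pairwise commute and are independent, and the operators X_L = X₀Z₅Z₆ and Z_L = Z₀Z₁Z₆ commute with all six generators and anticommute with each other, establishing that this is a valid [[7,1]] stabilizer code with weight-3 logical representatives (hence distance ≤ 3). -/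
/-- The six generators X₀X₁, X₂Z₅, X₃Z₆, X₄Z₆, Z₀Z₁Z₂X₅, Y₀Z₁Z₃Z₄Z₅Y₆ of the
[[7,1,3]] bare-ancilla code, in symplectic form (x-part, z-part). -/
def gen7 : Fin 6 → PauliVec 7 :=
  ![(ind {0, 1}, ind ∅),
    (ind {2}, ind {5}),
    (ind {3}, ind {6}),
    (ind {4}, ind {6}),
    (ind {5}, ind {0, 1, 2}),
    (ind {0, 6}, ind {0, 1, 3, 4, 5, 6})]

/-- Logical X = X₀Z₅Z₆. -/
def XL7 : PauliVec 7 := (ind {0}, ind {5, 6})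

/-- Logical Z = Z₀Z₁Z₆. -/
def ZL7 : PauliVec 7 := (ind ∅, ind {0, 1, 6})

/-- the six generators pairwise commute and are independent, and
`X_L = X₀Z₅Z₆`, `Z_L = Z₀Z₁Z₆` commute with all six generators, anticommute with
each other, and are weight-3 operators outside the stabilizer group: a valid
[[7,1]] stabilizer code with weight-3 logical representatives (hence distance ≤ 3). -/
theorem code713_stabilizer :
    (∀ i j, sp (gen7 i) (gen7 j) = 0) ∧
    (∀ c : Fin 6 → ZMod 2, (∑ i, c i • gen7 i) = 0 → c = 0) ∧
    (∀ i, sp XL7 (gen7 i) = 0) ∧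
    (∀ i, sp ZL7 (gen7 i) = 0) ∧
    sp XL7 ZL7 = 1 ∧
    pweight XL7 = 3 ∧ pweight ZL7 = 3 ∧
    XL7 ∉ Submodule.span (ZMod 2) (Set.range gen7) ∧
    ZL7 ∉ Submodule.span (ZMod 2) (Set.range gen7) := by
  refine ⟨by decide, by decide, by decide, by decide, by decide, by decide, by decide, ?_, ?_⟩ <;>
  · rw [Submodule.mem_span_range_iff_exists_fun]
    decide
end
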